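/- arXiv:2304.05156 — 2 statements merged into one kernel-verified Lean document; each statement's English description precedes it below -/
import Mathlib

section
/- Validity of the ACM upper bound: let I be a finite nonempty index set, X a set of candidate values for the first n−1 variables, C ⊆ X a sub-cube, f a residual function f(x,t,i) of x ∈ X, a scalar t ∈ ℝ, and index i ∈ I, and ε a threshold. Suppose [L(i), R(i)] are real intervals relaxing the inlier constraint on C, i.e. for all x ∈ C, t ∈ ℝ, i ∈ I, f(x,t,i) ≤ ε implies L(i) ≤ t ≤ R(i). Then there exists a stabber t* ∈ ℝ such that for every x ∈ C and every t ∈ ℝ, |{i ∈ I : f(x,t,i) ≤ ε}| ≤ |{i ∈ I : L(i) ≤ t* ≤ R(i)}|; i.e. the maximal stabbing count of the relaxed intervals is a valid upper bound for the consensus maximization objective over C × ℝ. -/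
/-- Validity of the ACM upper bound: if on the sub-cube `C` the inlier constraint
`f x t i ≤ ε` implies `t ∈ [L i, R i]`, then there is a stabber `t*` whose stabbing
count upper-bounds the consensus objective over `C × ℝ`. -/
theorem stmt_6 {α ι : Type*} [Fintype ι] [Nonempty ι] (X : Set α) (C : Set α)
    (hC : C ⊆ X) (f : α → ℝ → ι → ℝ) (ε : ℝ) (L R : ι → ℝ)
    (hrelax : ∀ x ∈ C, ∀ t : ℝ, ∀ i : ι, f x t i ≤ ε → L i ≤ t ∧ t ≤ R i) :
    ∃ tstar : ℝ, ∀ x ∈ C, ∀ t : ℝ,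
      {i : ι | f x t i ≤ ε}.ncard ≤ {i : ι | L i ≤ tstar ∧ tstar ≤ R i}.ncard := by
  set g : ℝ → ℕ := fun t => {i : ι | L i ≤ t ∧ t ≤ R i}.ncard with hg
  have hbdd : ∀ t, g t ≤ Fintype.card ι := fun t =>
    Set.ncard_le_ncard (Set.subset_univ _) Set.finite_univ |>.trans
      (by simp [Set.ncard_univ])
  have hSne : (Set.range g).Nonempty := Set.range_nonempty g
  have hSbdd : BddAbove (Set.range g) := ⟨Fintype.card ι, by rintro n ⟨t, rfl⟩; exact hbdd t⟩
  obtain ⟨tstar, hts⟩ := Nat.sSup_mem hSne hSbdd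
  refine ⟨tstar, fun x hx t => ?_⟩
  have hsub : {i : ι | f x t i ≤ ε} ⊆ {i : ι | L i ≤ t ∧ t ≤ R i} :=
    fun i hi => hrelax x hx t i hi
  calc {i : ι | f x t i ≤ ε}.ncard ≤ g t :=
        Set.ncard_le_ncard hsub (Set.toFinite _)
    _ ≤ sSup (Set.range g) := le_csSup hSbdd ⟨t, rfl⟩
    _ = g tstar := hts.symm
end

section
/- Maximizer transfer between the relaxed and original correspondence-less objectives: let M and N be finite index sets, T any set of parameters, and P(t, m, n) a predicate (the pair (m,n) is consistent with parameter t). Define g(t) = Σ_{m ∈ M} |{n ∈ N : P(t,m,n)}| and h(t) = |{m ∈ M : ∃ n ∈ N, P(t,m,n)}|. If t* maximizes g, i.e. g(t) ≤ g(t*) for all t ∈ T, and if for every m ∈ M at most one n satisfies P(t*, m, n) (i.e. |{n : P(t*,m,n)}| ≤ 1), then t* also maximizes h, i.e. h(t) ≤ h(t*) for all t ∈ T. -/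
/-- Maximizer transfer between the relaxed objective `g` (counting all consistent
pairs) and the original objective `h` (counting indices `m` with at least one
consistent `n`): if `t*` maximizes `g` and admits at most one consistent `n` per
`m`, then `t*` also maximizes `h`. -/
theorem stmt_12 {M N T : Type*} [Fintype M] [Fintype N]
    (P : T → M → N → Prop) (tstar : T)
    (hmax : ∀ t : T,
      (∑ m : M, {n : N | P t m n}.ncard) ≤ (∑ m : M, {n : N | P tstar m n}.ncard))
    (huniq : ∀ m : M, {n : N | P tstar m n}.ncard ≤ 1) :
    ∀ t : T, {m : M | ∃ n : N, P t m n}.ncard ≤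
      {m : M | ∃ n : N, P tstar m n}.ncard := by
  classical
  have key : ∀ t : T, {m : M | ∃ n : N, P t m n}.ncard
      = ∑ m : M, (if ∃ n : N, P t m n then 1 else 0) := by
    intro t
    rw [Set.ncard_eq_toFinset_card', Set.toFinset_setOf, Finset.card_filter]
  intro t
  calc {m : M | ∃ n : N, P t m n}.ncard
      = ∑ m : M, (if ∃ n : N, P t m n then 1 else 0) := key t
    _ ≤ ∑ m : M, {n : N | P t m n}.ncard := by
        apply Finset.sum_le_sum
        intro m _
        split_ifs with h
        · have : ({n : N | P t m n}).Nonempty := h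
          exact Nat.succ_le_of_lt ((Set.ncard_pos (Set.toFinite _)).mpr this)
        · exact Nat.zero_le _
    _ ≤ ∑ m : M, {n : N | P tstar m n}.ncard := hmax t
    _ ≤ ∑ m : M, (if ∃ n : N, P tstar m n then 1 else 0) := by
        apply Finset.sum_le_sum
        intro m _
        split_ifs with h
        · exact huniq m
        · have : {n : N | P tstar m n} = ∅ := by
            ext n; simp only [Set.mem_setOf_eq, Set.mem_empty_iff_false, iff_false]
            exact fun hn => h ⟨n, hn⟩
          simp [this]
    _ = {m : M | ∃ n : N, P tstar m n}.ncard := (key tstar).symm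
end
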